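/- arXiv:2311.15152 — 4 statements merged into one kernel-verified Lean document; each statement's English description precedes it below -/
import Mathlib

section
/- Let f : ℝⁿ → ℝ be convex and continuously differentiable, and let ξ, ζ : [0,T) → ℝⁿ be differentiable curves satisfying ξ'(t) = −∇f(ξ(t)) and ζ'(t) = −∇f(ζ(t)) for all t. Then for all t ∈ [0,T), |ζ(t) − ξ(t)| ≤ |ζ(0) − ξ(0)| (the contraction property of gradient flow in Euclidean space). -/
/-!
Along a line, a convex function has nondecreasing derivative, so the gradient of a convex `C¹`
function is a monotone operator: `⟪∇f y - ∇f x, y - x⟫ ≥ 0`. For two gradient-flow curves the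
derivative of `‖ζ - ξ‖²` is `-2⟪∇f ζ - ∇f ξ, ζ - ξ⟫ ≤ 0`, so their distance never increases.
-/

open Set

lemma ConvexOn.fderiv_apply_sub_le_fderiv_apply_sub {E : Type*} [NormedAddCommGroup E]
    [NormedSpace ℝ E] {s : Set E} {f : E → ℝ} (hf : ConvexOn ℝ s f) {x y : E}
    (hx : x ∈ s) (hy : y ∈ s) (hfx : DifferentiableAt ℝ f x) (hfy : DifferentiableAt ℝ f y) :
    fderiv ℝ f x (y - x) ≤ fderiv ℝ f y (y - x) := by
  set ℓ : ℝ →ᵃ[ℝ] E := AffineMap.lineMap x y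
  have hline : ConvexOn ℝ (ℓ ⁻¹' s) (f ∘ ℓ) := hf.comp_affineMap ℓ
  have h0 : (0 : ℝ) ∈ ℓ ⁻¹' s := by simpa [ℓ] using hx
  have h1 : (1 : ℝ) ∈ ℓ ⁻¹' s := by simpa [ℓ] using hy
  have hd0 : HasDerivAt (f ∘ ℓ) (fderiv ℝ f x (y - x)) 0 :=
    hfx.hasFDerivAt.comp_hasDerivAt_of_eq 0 AffineMap.hasDerivAt_lineMap (by simp [ℓ])
  have hd1 : HasDerivAt (f ∘ ℓ) (fderiv ℝ f y (y - x)) 1 :=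
    hfy.hasFDerivAt.comp_hasDerivAt_of_eq 1 AffineMap.hasDerivAt_lineMap (by simp [ℓ])
  exact (hline.le_slope_of_hasDerivAt h0 h1 one_pos hd0).trans
    (hline.slope_le_of_hasDerivAt h0 h1 one_pos hd1)

lemma ConvexOn.inner_gradient_sub_gradient_nonneg {E : Type*} [NormedAddCommGroup E]
    [InnerProductSpace ℝ E] [CompleteSpace E] {s : Set E} {f : E → ℝ} (hf : ConvexOn ℝ s f)
    {x y : E} (hx : x ∈ s) (hy : y ∈ s) (hfx : DifferentiableAt ℝ f x)
    (hfy : DifferentiableAt ℝ f y) :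
    0 ≤ inner ℝ (gradient f y - gradient f x) (y - x) := by
  rw [inner_sub_left, inner_gradient_left, inner_gradient_left, sub_nonneg]
  exact hf.fderiv_apply_sub_le_fderiv_apply_sub hx hy hfx hfy

section

variable {E : Type*} [NormedAddCommGroup E] [InnerProductSpace ℝ E] {D : Set ℝ}

lemma antitoneOn_norm_of_inner_deriv_nonpos (hD : Convex ℝ D) {u u' : ℝ → E}
    (hu : ∀ t ∈ D, HasDerivAt u (u' t) t) (hinner : ∀ t ∈ D, inner ℝ (u t) (u' t) ≤ 0) :
    AntitoneOn (‖u ·‖) D := by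
  have hsq : AntitoneOn (‖u ·‖ ^ 2) D := by
    refine antitoneOn_of_hasDerivWithinAt_nonpos hD
      (fun t ht => (hu t ht).norm_sq.continuousAt.continuousWithinAt)
      (fun t ht => (hu t (interior_subset ht)).norm_sq.hasDerivWithinAt)
      fun t ht => by linarith [hinner t (interior_subset ht)]
  intro a ha b hb hab
  exact (pow_le_pow_iff_left₀ (norm_nonneg _) (norm_nonneg _) two_ne_zero).1 (hsq ha hb hab)

lemma antitoneOn_norm_sub_of_monotone_flow {F : E → E}
    (hF : ∀ x y, 0 ≤ inner ℝ (F y - F x) (y - x)) (hD : Convex ℝ D) {ξ ζ : ℝ → E}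
    (hξ : ∀ t ∈ D, HasDerivAt ξ (-F (ξ t)) t) (hζ : ∀ t ∈ D, HasDerivAt ζ (-F (ζ t)) t) :
    AntitoneOn (fun t => ‖ζ t - ξ t‖) D := by
  refine antitoneOn_norm_of_inner_deriv_nonpos hD (fun t ht => (hζ t ht).sub (hξ t ht))
    (fun t _ => ?_)
  rw [show -F (ζ t) - -F (ξ t) = -(F (ζ t) - F (ξ t)) by abel, inner_neg_right,
    real_inner_comm, neg_nonpos]
  exact hF _ _

end

/-- contraction property of gradient flow of a convex `C¹` function
in Euclidean space. -/
theorem gradient_flow_contraction (n : ℕ) (T : ℝ)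
    (f : EuclideanSpace ℝ (Fin n) → ℝ)
    (hconv : ConvexOn ℝ Set.univ f)
    (hC1 : ContDiff ℝ 1 f)
    (ξ ζ : ℝ → EuclideanSpace ℝ (Fin n))
    (hξ : ∀ t ∈ Set.Ico (0:ℝ) T, HasDerivAt ξ (-(gradient f (ξ t))) t)
    (hζ : ∀ t ∈ Set.Ico (0:ℝ) T, HasDerivAt ζ (-(gradient f (ζ t))) t) :
    ∀ t ∈ Set.Ico (0:ℝ) T, ‖ζ t - ξ t‖ ≤ ‖ζ 0 - ξ 0‖ := by
  have hf := hC1.differentiable one_ne_zero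
  have hmono : ∀ x y, 0 ≤ inner ℝ (gradient f y - gradient f x) (y - x) := fun x y =>
    hconv.inner_gradient_sub_gradient_nonneg (mem_univ x) (mem_univ y) (hf x) (hf y)
  intro t ht
  exact antitoneOn_norm_sub_of_monotone_flow hmono (convex_Ico 0 T) hξ hζ
    ⟨le_rfl, ht.1.trans_lt ht.2⟩ ht ht.1
end

section
/- Let K ∈ ℝ and let f : ℝⁿ → ℝ be K-convex and continuously differentiable. If ξ, ζ : [0,T) → ℝⁿ are differentiable curves with ξ'(t) = −∇f(ξ(t)) and ζ'(t) = −∇f(ζ(t)), then |ζ(t) − ξ(t)| ≤ e^{−Kt}·|ζ(0) − ξ(0)| for all t ∈ [0,T) (K-contraction property). -/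
open Filter Set Real
open scoped Topology RealInnerProductSpace

/-!
K-convexity bounds the difference quotients of `f` along a segment, which in the limit gives
`f y ≥ f x + ⟪∇f x, y - x⟫ + K/2 ‖y - x‖²`; adding this to the same bound with `x` and `y`
swapped yields `K ‖y - x‖² ≤ ⟪∇f y - ∇f x, y - x⟫`. For `u = ζ - ξ` this says
`(‖u‖²)' ≤ -2K ‖u‖²`, so `exp (2Kt) ‖u t‖²` is nonincreasing.
-/

def KConvex {E : Type*} [NormedAddCommGroup E] [NormedSpace ℝ E] (K : ℝ) (f : E → ℝ) :
    Prop :=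
  ∀ x y : E, ∀ s : ℝ, s ∈ Ioo (0:ℝ) 1 →
    f ((1 - s) • x + s • y) ≤ (1 - s) * f x + s * f y - K / 2 * (1 - s) * s * ‖y - x‖ ^ 2

namespace KConvex

section NormedSpace

variable {E : Type*} [NormedAddCommGroup E] [NormedSpace ℝ E] {K : ℝ} {f : E → ℝ}

lemma slope_le (hf : KConvex K f) (x y : E) {s : ℝ} (hs : s ∈ Ioo (0:ℝ) 1) :
    slope (fun r : ℝ => f (x + r • (y - x))) 0 s ≤
      f y - f x - K / 2 * (1 - s) * ‖y - x‖ ^ 2 := by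
  have h := hf x y s hs
  rw [show (1 - s) • x + s • y = x + s • (y - x) by module] at h
  rw [slope_def_field, zero_smul, add_zero, sub_zero, div_le_iff₀' hs.1]
  linarith

lemma apply_sub_le_of_hasFDerivAt (hf : KConvex K f) {f' : E →L[ℝ] ℝ} {x : E}
    (hfx : HasFDerivAt f f' x) (y : E) :
    f' (y - x) ≤ f y - f x - K / 2 * ‖y - x‖ ^ 2 := by
  have hline : HasDerivAt (fun r : ℝ => x + r • (y - x)) (y - x) 0 := by
    simpa using ((hasDerivAt_id (0:ℝ)).smul_const (y - x)).const_add x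
  have hφ : HasDerivAt (fun r : ℝ => f (x + r • (y - x))) (f' (y - x)) 0 :=
    (by simpa using hfx : HasFDerivAt f f' (x + (0:ℝ) • (y - x))).comp_hasDerivAt 0 hline
  have hslope : Tendsto (slope (fun r : ℝ => f (x + r • (y - x))) 0) (𝓝[>] 0)
      (𝓝 (f' (y - x))) :=
    (hasDerivWithinAt_iff_tendsto_slope' self_notMem_Ioi).mp hφ.hasDerivWithinAt
  have hbound : Tendsto (fun r : ℝ => f y - f x - K / 2 * (1 - r) * ‖y - x‖ ^ 2) (𝓝[>] 0)
      (𝓝 (f y - f x - K / 2 * ‖y - x‖ ^ 2)) := by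
    have : Continuous (fun r : ℝ => f y - f x - K / 2 * (1 - r) * ‖y - x‖ ^ 2) := by fun_prop
    simpa using this.tendsto' 0 _ (by ring) |>.mono_left nhdsWithin_le_nhds
  refine le_of_tendsto_of_tendsto hslope hbound ?_
  filter_upwards [Ioo_mem_nhdsGT one_pos] with s hs using hf.slope_le x y hs

end NormedSpace

variable {E : Type*} [NormedAddCommGroup E] [InnerProductSpace ℝ E] [CompleteSpace E]
  {K : ℝ} {f : E → ℝ}

lemma mul_norm_sq_le_inner_gradient_sub (hf : KConvex K f) {x y gx gy : E}
    (hx : HasGradientAt f gx x) (hy : HasGradientAt f gy y) :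
    K * ‖y - x‖ ^ 2 ≤ ⟪gy - gx, y - x⟫ := by
  have hxy := hf.apply_sub_le_of_hasFDerivAt hx.hasFDerivAt y
  have hyx := hf.apply_sub_le_of_hasFDerivAt hy.hasFDerivAt x
  simp only [InnerProductSpace.toDual_apply_apply] at hxy hyx
  rw [norm_sub_rev, ← neg_sub y x, inner_neg_right] at hyx
  rw [inner_sub_left]
  linarith

end KConvex

section Contraction

variable {E : Type*} [NormedAddCommGroup E] [InnerProductSpace ℝ E] {K T : ℝ} {u u' : ℝ → E}

lemma antitoneOn_exp_mul_norm_sq_of_inner_deriv_le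
    (hu : ∀ t ∈ Ico 0 T, HasDerivAt u (u' t) t)
    (hdiss : ∀ t ∈ Ico 0 T, ⟪u t, u' t⟫ ≤ -K * ‖u t‖ ^ 2) :
    AntitoneOn (fun t => exp (2 * K * t) * ‖u t‖ ^ 2) (Ico 0 T) := by
  have hderiv : ∀ t ∈ Ico 0 T, HasDerivAt (fun t => exp (2 * K * t) * ‖u t‖ ^ 2)
      (exp (2 * K * t) * (2 * K) * ‖u t‖ ^ 2 + exp (2 * K * t) * (2 * ⟪u t, u' t⟫)) t :=
    fun t ht => (((hasDerivAt_id t).const_mul (2 * K)).exp.congr_deriv (by simp)).mul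
      (hu t ht).norm_sq
  have hint : interior (Ico (0:ℝ) T) ⊆ Ico 0 T := interior_subset
  refine antitoneOn_of_hasDerivWithinAt_nonpos (convex_Ico 0 T)
    (fun t ht => (hderiv t ht).continuousAt.continuousWithinAt)
    (fun t ht => (hderiv t (hint ht)).hasDerivWithinAt) fun t ht => ?_
  have := hdiss t (hint ht)
  have := exp_pos (2 * K * t)
  nlinarith

lemma norm_le_exp_mul_norm_of_inner_deriv_le
    (hu : ∀ t ∈ Ico 0 T, HasDerivAt u (u' t) t)
    (hdiss : ∀ t ∈ Ico 0 T, ⟪u t, u' t⟫ ≤ -K * ‖u t‖ ^ 2) {t : ℝ}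
    (ht : t ∈ Ico 0 T) :
    ‖u t‖ ≤ exp (-K * t) * ‖u 0‖ := by
  have h := antitoneOn_exp_mul_norm_sq_of_inner_deriv_le hu hdiss
    ⟨le_rfl, ht.1.trans_lt ht.2⟩ ht ht.1
  have hsq : ‖u t‖ ^ 2 ≤ (exp (-K * t) * ‖u 0‖) ^ 2 :=
    calc ‖u t‖ ^ 2 = exp (-(2 * K * t)) * (exp (2 * K * t) * ‖u t‖ ^ 2) := by
          rw [← mul_assoc, ← exp_add, neg_add_cancel, exp_zero, one_mul]
      _ ≤ exp (-(2 * K * t)) * ‖u 0‖ ^ 2 := by gcongr; simpa using h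
      _ = (exp (-K * t) * ‖u 0‖) ^ 2 := by rw [mul_pow, ← exp_nat_mul]; ring_nf
  exact (pow_le_pow_iff_left₀ (norm_nonneg _) (by positivity) two_ne_zero).mp hsq

end Contraction

/-- `K`-contraction property of gradient flow of a `K`-convex `C¹`
function in Euclidean space. -/
theorem gradient_flow_K_contraction (n : ℕ) (K T : ℝ)
    (f : EuclideanSpace ℝ (Fin n) → ℝ)
    (hKconv : ∀ x y : EuclideanSpace ℝ (Fin n), ∀ s : ℝ, s ∈ Set.Ioo (0:ℝ) 1 →
      f ((1 - s) • x + s • y) ≤ (1 - s) * f x + s * f y - K / 2 * (1 - s) * s * ‖y - x‖ ^ 2)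
    (hC1 : ContDiff ℝ 1 f)
    (ξ ζ : ℝ → EuclideanSpace ℝ (Fin n))
    (hξ : ∀ t ∈ Set.Ico (0:ℝ) T, HasDerivAt ξ (-(gradient f (ξ t))) t)
    (hζ : ∀ t ∈ Set.Ico (0:ℝ) T, HasDerivAt ζ (-(gradient f (ζ t))) t) :
    ∀ t ∈ Set.Ico (0:ℝ) T, ‖ζ t - ξ t‖ ≤ Real.exp (-K * t) * ‖ζ 0 - ξ 0‖ := by
  have hgrad (x : EuclideanSpace ℝ (Fin n)) : HasGradientAt f (gradient f x) x :=
    (hC1.differentiable one_ne_zero x).hasGradientAt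
  refine fun t ht => norm_le_exp_mul_norm_of_inner_deriv_le
    (fun s hs => (hζ s hs).sub (hξ s hs)) (fun s hs => ?_) ht
  have hmono := KConvex.mul_norm_sq_le_inner_gradient_sub hKconv (hgrad (ξ s)) (hgrad (ζ s))
  change ⟪ζ s - ξ s, -gradient f (ζ s) - -gradient f (ξ s)⟫ ≤ -K * ‖ζ s - ξ s‖ ^ 2
  rw [neg_sub_neg, ← neg_sub (gradient f (ζ s)), inner_neg_right, real_inner_comm]
  linarith
end

section
/- Let f : ℝⁿ → ℝ be convex and C¹, and let ξ, ζ be gradient curves of f (solutions of ξ' = −∇f∘ξ). Then the function t ↦ |ζ(t) − ξ(t)|² is nonincreasing on [0,T); in particular its derivative satisfies (d/dt)|ζ(t)−ξ(t)|² = −2⟨ζ(t)−ξ(t), ∇f(ζ(t)) − ∇f(ξ(t))⟩ ≤ 0. -/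
/-!
Convexity of `f` makes `∇f` a monotone operator: on the segment from `x` to `y`, `f` restricts to a
convex function of one variable whose derivative `s ↦ ⟪∇f (x + s • (y - x)), y - x⟫` increases.
So the derivative `-2 ⟪ζ - ξ, ∇f ζ - ∇f ξ⟫` of the squared distance is nonpositive.
-/

open RealInnerProductSpace Set
open scoped Gradient

section GradientMonotone

variable {E : Type*} [NormedAddCommGroup E] [InnerProductSpace ℝ E] [CompleteSpace E]

theorem HasGradientAt.hasDerivAt_comp_lineMap {f : E → ℝ} {x y g : E} {s : ℝ}
    (hf : HasGradientAt f g (AffineMap.lineMap x y s)) :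
    HasDerivAt (f ∘ AffineMap.lineMap x y) ⟪g, y - x⟫ s := by
  simpa using hf.hasFDerivAt.comp_hasDerivAt s AffineMap.hasDerivAt_lineMap

theorem ConvexOn.inner_sub_gradient_sub_nonneg {f : E → ℝ} (hf : ConvexOn ℝ univ f) {x y : E}
    (hx : DifferentiableAt ℝ f x) (hy : DifferentiableAt ℝ f y) :
    0 ≤ ⟪y - x, ∇ f y - ∇ f x⟫ := by
  let ℓ : ℝ →ᵃ[ℝ] E := AffineMap.lineMap x y
  have hφ : ConvexOn ℝ univ (f ∘ ℓ) := hf.comp_affineMap ℓ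
  have h0 : HasDerivAt (f ∘ ℓ) ⟪∇ f x, y - x⟫ 0 :=
    HasGradientAt.hasDerivAt_comp_lineMap <| by
      rw [AffineMap.lineMap_apply_zero]; exact hx.hasGradientAt
  have h1 : HasDerivAt (f ∘ ℓ) ⟪∇ f y, y - x⟫ 1 :=
    HasGradientAt.hasDerivAt_comp_lineMap <| by
      rw [AffineMap.lineMap_apply_one]; exact hy.hasGradientAt
  have hmono : ⟪∇ f x, y - x⟫ ≤ ⟪∇ f y, y - x⟫ :=
    (hφ.le_slope_of_hasDerivAt (mem_univ 0) (mem_univ 1) one_pos h0).trans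
      (hφ.slope_le_of_hasDerivAt (mem_univ 0) (mem_univ 1) one_pos h1)
  rw [inner_sub_right, real_inner_comm, real_inner_comm (∇ f x)]
  linarith

theorem hasDerivAt_norm_sub_sq_of_gradient_flow {f : E → ℝ} {ξ ζ : ℝ → E} {t : ℝ}
    (hξ : HasDerivAt ξ (-∇ f (ξ t)) t) (hζ : HasDerivAt ζ (-∇ f (ζ t)) t) :
    HasDerivAt (fun t => ‖ζ t - ξ t‖ ^ 2) (-2 * ⟪ζ t - ξ t, ∇ f (ζ t) - ∇ f (ξ t)⟫) t := by
  refine (hζ.sub hξ).norm_sq.congr_deriv ?_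
  simp only [Pi.sub_apply, neg_sub_neg]
  rw [← neg_sub (∇ f (ζ t)), inner_neg_right]
  ring

end GradientMonotone

theorem antitoneOn_of_hasDerivAt_nonpos {D : Set ℝ} (hD : Convex ℝ D) {f f' : ℝ → ℝ}
    (hf : ∀ x ∈ D, HasDerivAt f (f' x) x) (hf' : ∀ x ∈ D, f' x ≤ 0) : AntitoneOn f D :=
  antitoneOn_of_hasDerivWithinAt_nonpos hD
    (fun x hx => (hf x hx).continuousAt.continuousWithinAt)
    (fun x hx => (hf x (interior_subset hx)).hasDerivWithinAt)
    (fun x hx => hf' x (interior_subset hx))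

/-- along two gradient curves of a convex `C¹` function, the squared
distance is nonincreasing, with derivative `−2⟨ζ−ξ, ∇f(ζ)−∇f(ξ)⟩ ≤ 0`. -/
theorem gradient_flow_sq_dist_nonincreasing (n : ℕ) (T : ℝ)
    (f : EuclideanSpace ℝ (Fin n) → ℝ)
    (hconv : ConvexOn ℝ Set.univ f)
    (hC1 : ContDiff ℝ 1 f)
    (ξ ζ : ℝ → EuclideanSpace ℝ (Fin n))
    (hξ : ∀ t ∈ Set.Ico (0:ℝ) T, HasDerivAt ξ (-(gradient f (ξ t))) t)
    (hζ : ∀ t ∈ Set.Ico (0:ℝ) T, HasDerivAt ζ (-(gradient f (ζ t))) t) :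
    AntitoneOn (fun t => ‖ζ t - ξ t‖ ^ 2) (Set.Ico (0:ℝ) T) ∧
    ∀ t ∈ Set.Ico (0:ℝ) T,
      HasDerivAt (fun t => ‖ζ t - ξ t‖ ^ 2)
        (-2 * ⟪ζ t - ξ t, gradient f (ζ t) - gradient f (ξ t)⟫) t ∧
      -2 * ⟪ζ t - ξ t, gradient f (ζ t) - gradient f (ξ t)⟫ ≤ 0 := by
  have hdiff : Differentiable ℝ f := hC1.differentiable one_ne_zero
  have hderiv : ∀ t ∈ Ico (0:ℝ) T, HasDerivAt (fun t => ‖ζ t - ξ t‖ ^ 2)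
      (-2 * ⟪ζ t - ξ t, ∇ f (ζ t) - ∇ f (ξ t)⟫) t := fun t ht =>
    hasDerivAt_norm_sub_sq_of_gradient_flow (hξ t ht) (hζ t ht)
  have hnonpos : ∀ t ∈ Ico (0:ℝ) T, -2 * ⟪ζ t - ξ t, ∇ f (ζ t) - ∇ f (ξ t)⟫ ≤ 0 := fun t _ => by
    linarith [hconv.inner_sub_gradient_sub_nonneg (hdiff (ξ t)) (hdiff (ζ t))]
  exact ⟨antitoneOn_of_hasDerivAt_nonpos (convex_Ico 0 T) hderiv hnonpos,
    fun t ht => ⟨hderiv t ht, hnonpos t ht⟩⟩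
end

section
/- Let ‖·‖ be a norm on ℝⁿ differentiable away from the origin, and let v, w be linearly independent unit vectors. If the derivative of the norm satisfies d[‖·‖]_w(v) = 0 and d[‖·‖]_v(w) = 0, and for every a ∈ ℝ the tangent line condition d[‖·‖]_p(a·v − w) = 0 holds at the point p of the unit sphere that is the unit multiple of v + a·w, then the unit sphere of ‖·‖ restricted to span{v, w}, expressed in the coordinates (b, c) ↦ b·v + c·w, is the Euclidean circle b² + c² = 1. -/
/-- Step 4 of the main theorem: let `N` be a symmetric norm on
`ℝⁿ` differentiable away from `0`, and `v, w` linearly independent unit vectors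
with `d[N]_w(v) = 0` and `d[N]_v(w) = 0`.  If moreover for every `a ∈ ℝ` and
every unit multiple `p = r•(v + a•w)` (`r > 0`) the tangent line condition
`d[N]_p(a•v − w) = 0` holds, then the unit sphere of `N` in the plane spanned by
`v, w`, in the coordinates `(b,c) ↦ b•v + c•w`, is the Euclidean circle
`b² + c² = 1`. -/
theorem unit_sphere_is_circle (n : ℕ)
    (N : EuclideanSpace ℝ (Fin n) → ℝ)
    (hpos : ∀ x, 0 ≤ N x) (hzero : ∀ x, N x = 0 ↔ x = 0)
    (hhom : ∀ x : EuclideanSpace ℝ (Fin n), ∀ c : ℝ, 0 < c → N (c • x) = c * N x)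
    (htri : ∀ x y, N (x + y) ≤ N x + N y)
    (hsymm : ∀ x, N (-x) = N x)
    (hdiff : ∀ x : EuclideanSpace ℝ (Fin n), x ≠ 0 → DifferentiableAt ℝ N x)
    (v w : EuclideanSpace ℝ (Fin n))
    (hindep : LinearIndependent ℝ ![v, w])
    (hv : N v = 1) (hw : N w = 1)
    (hvw : fderiv ℝ N w v = 0) (hwv : fderiv ℝ N v w = 0)
    (htan : ∀ a r : ℝ, 0 < r → N (r • (v + a • w)) = 1 →
      fderiv ℝ N (r • (v + a • w)) (a • v - w) = 0) :
    ∀ b c : ℝ, N (b • v + c • w) = 1 ↔ b ^ 2 + c ^ 2 = 1 := by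
  -- positivity of N off zero
  have hposne : ∀ x : EuclideanSpace ℝ (Fin n), x ≠ 0 → 0 < N x := by
    intro x hx
    rcases lt_or_eq_of_le (hpos x) with h | h
    · exact h
    · exact absurd ((hzero x).mp h.symm) hx
  have hvw0 : ∀ b c : ℝ, b • v + c • w = 0 → b = 0 ∧ c = 0 := by
    intro b c h
    exact LinearIndependent.pair_iff.mp hindep b c h
  have hne : ∀ a : ℝ, v + a • w ≠ 0 := by
    intro a h
    have h' : (1 : ℝ) • v + a • w = 0 := by simpa using h
    exact one_ne_zero (hvw0 1 a h').1
  -- Euler's relation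
  have euler : ∀ x : EuclideanSpace ℝ (Fin n), x ≠ 0 → fderiv ℝ N x x = N x := by
    intro x hx
    have h1 : HasDerivAt (fun t : ℝ => t • x) x 1 := by
      simpa using (hasDerivAt_id (1 : ℝ)).smul_const x
    have h2 : HasFDerivAt N (fderiv ℝ N x) ((1 : ℝ) • x) := by
      simpa using (hdiff x hx).hasFDerivAt
    have hN : HasDerivAt (fun t : ℝ => N (t • x)) (fderiv ℝ N x x) 1 :=
      h2.comp_hasDerivAt 1 h1
    have heq : (fun t : ℝ => N (t • x)) =ᶠ[nhds (1 : ℝ)] fun t => t * N x := by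
      filter_upwards [lt_mem_nhds (zero_lt_one)] with t ht
      exact hhom x t ht
    have hN' : HasDerivAt (fun t : ℝ => t * N x) (fderiv ℝ N x x) 1 :=
      hN.congr_of_eventuallyEq heq.symm
    have h3 : HasDerivAt (fun t : ℝ => t * N x) (N x) 1 := by
      simpa using (hasDerivAt_id (1 : ℝ)).mul_const (N x)
    exact hN'.unique h3
  -- 0-homogeneity of the gradient
  have gradhom : ∀ x : EuclideanSpace ℝ (Fin n), x ≠ 0 → ∀ c : ℝ, 0 < c →
      ∀ u, fderiv ℝ N (c • x) u = fderiv ℝ N x u := by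
    intro x hx c hc u
    have hcx : c • x ≠ 0 := smul_ne_zero hc.ne' hx
    have hy : HasFDerivAt (fun y : EuclideanSpace ℝ (Fin n) => c • y)
        (c • ContinuousLinearMap.id ℝ (EuclideanSpace ℝ (Fin n))) x := by
      exact (hasFDerivAt_id x).const_smul c
    have h1 : HasFDerivAt (fun y => N (c • y))
        ((fderiv ℝ N (c • x)).comp (c • ContinuousLinearMap.id ℝ (EuclideanSpace ℝ (Fin n)))) x :=
      (hdiff _ hcx).hasFDerivAt.comp x hy
    have h2 : HasFDerivAt (fun y => N (c • y)) (c • fderiv ℝ N x) x := by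
      have heq : (fun y => N (c • y)) = fun y => c * N y := funext fun y => hhom y c hc
      rw [heq]
      exact (hdiff x hx).hasFDerivAt.const_mul c
    have h3 := h1.unique h2
    have h4 := congrArg (fun (L : EuclideanSpace ℝ (Fin n) →L[ℝ] ℝ) => L u) h3
    simp only [ContinuousLinearMap.coe_comp', Function.comp_apply,
      ContinuousLinearMap.smul_apply, ContinuousLinearMap.coe_smul',
      Pi.smul_apply, ContinuousLinearMap.coe_id', id_eq, smul_eq_mul] at h4
    rw [map_smul, smul_eq_mul] at h4
    exact mul_left_cancel₀ hc.ne' h4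
  -- the profile function g
  set g : ℝ → ℝ := fun a => N (v + a • w) with hg
  have hder : ∀ a : ℝ, HasDerivAt g (fderiv ℝ N (v + a • w) w) a := by
    intro a
    have h1 : HasDerivAt (fun a : ℝ => v + a • w) w a := by
      simpa using ((hasDerivAt_id a).smul_const w).const_add v
    exact (hdiff _ (hne a)).hasFDerivAt.comp_hasDerivAt a h1
  -- the ODE for g
  have hODE : ∀ a : ℝ, HasDerivAt g (a * g a / (1 + a ^ 2)) a := by
    intro a
    have hx := hne a
    have hga : 0 < g a := hposne _ hx
    have hr : (0 : ℝ) < (g a)⁻¹ := inv_pos.mpr hga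
    have hN1 : N ((g a)⁻¹ • (v + a • w)) = 1 := by
      rw [hhom _ _ hr]
      exact inv_mul_cancel₀ hga.ne'
    have h0 := htan a (g a)⁻¹ hr hN1
    have h0' : fderiv ℝ N (v + a • w) (a • v - w) = 0 := by
      rw [← gradhom _ hx _ hr]
      exact h0
    have hE : fderiv ℝ N (v + a • w) (v + a • w) = g a := euler _ hx
    have hlin1 : fderiv ℝ N (v + a • w) (a • v - w)
        = a * fderiv ℝ N (v + a • w) v - fderiv ℝ N (v + a • w) w := by
      simp [map_sub, map_smul, smul_eq_mul]
    have hlin2 : fderiv ℝ N (v + a • w) (v + a • w)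
        = fderiv ℝ N (v + a • w) v + a * fderiv ℝ N (v + a • w) w := by
      simp [map_add, map_smul, smul_eq_mul]
    rw [hlin1] at h0'
    rw [hlin2] at hE
    have hden : (1 : ℝ) + a ^ 2 ≠ 0 := by positivity
    have hB : fderiv ℝ N (v + a • w) w = a * g a / (1 + a ^ 2) := by
      field_simp
      linear_combination a * hE - h0'
    have := hder a
    rwa [hB] at this
  -- solve the ODE : g a ^ 2 = 1 + a ^ 2
  have hsq : ∀ a : ℝ, g a ^ 2 = 1 + a ^ 2 := by
    have hu : ∀ a : ℝ, HasDerivAt (fun a => g a ^ 2 / (1 + a ^ 2)) 0 a := by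
      intro a
      have hden : (1 : ℝ) + a ^ 2 ≠ 0 := by positivity
      have h1 : HasDerivAt (fun a => g a ^ 2)
          (2 * g a ^ 1 * (a * g a / (1 + a ^ 2))) a := by
        simpa using (hODE a).fun_pow 2
      have h2 : HasDerivAt (fun a : ℝ => 1 + a ^ 2) (2 * a) a := by
        simpa using (hasDerivAt_pow 2 a).const_add 1
      have h3 := h1.fun_div h2 hden
      refine h3.congr_deriv ?_
      field_simp
      ring
    have hconst : ∀ a : ℝ, g a ^ 2 / (1 + a ^ 2) = g 0 ^ 2 / (1 + (0 : ℝ) ^ 2) :=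
      fun a => is_const_of_deriv_eq_zero (fun x => (hu x).differentiableAt)
        (fun x => (hu x).deriv) a 0
    intro a
    have h0 : g 0 = 1 := by simp [hg, hv]
    have hca := hconst a
    rw [h0] at hca
    have hden : (1 : ℝ) + a ^ 2 ≠ 0 := by positivity
    field_simp at hca
    linarith [hca]
  -- the squared norm formula
  have hmain : ∀ b c : ℝ, (N (b • v + c • w)) ^ 2 = b ^ 2 + c ^ 2 := by
    have hpos_case : ∀ b c : ℝ, 0 < b → (N (b • v + c • w)) ^ 2 = b ^ 2 + c ^ 2 := by
      intro b c hb
      have hx : b • v + c • w = b • (v + (c / b) • w) := by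
        rw [smul_add, smul_smul]
        field_simp
      rw [hx, hhom _ _ hb, mul_pow]
      have := hsq (c / b)
      rw [hg] at this
      rw [this]
      field_simp
    intro b c
    rcases lt_trichotomy b 0 with hb | hb | hb
    · have hx : N (b • v + c • w) = N ((-b) • v + (-c) • w) := by
        rw [← hsymm (b • v + c • w)]
        congr 1
        module
      rw [hx, hpos_case (-b) (-c) (by linarith)]
      ring
    · subst hb
      rcases lt_trichotomy c 0 with hc | hc | hc
      · have hx : N ((0 : ℝ) • v + c • w) = N ((-c) • w) := by
          rw [← hsymm ((0 : ℝ) • v + c • w)]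
          congr 1
          module
        rw [hx, hhom w (-c) (by linarith), hw]
        ring
      · subst hc
        simp [(hzero 0).mpr rfl]
      · have hx : (0 : ℝ) • v + c • w = c • w := by simp
        rw [hx, hhom w c hc, hw]
        ring
    · exact hpos_case b c hb
  intro b c
  constructor
  · intro h
    have := hmain b c
    rw [h] at this
    simpa using this.symm
  · intro h
    have h2 := hmain b c
    rw [h] at h2
    have hN := hpos (b • v + c • w)
    have hfac : (N (b • v + c • w) - 1) * (N (b • v + c • w) + 1) = 0 := by nlinarith
    rcases mul_eq_zero.mp hfac with h3 | h3
    · linarith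
    · linarith
end
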